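/- Let W be a finite Coxeter group and v < w in Bruhat order. Then the alternating sum Σ_{v ≤ z ≤ w} (-1)^{ℓ(z)} equals 0; equivalently, every interval [v, w] of length at least 1 in Bruhat order is Eulerian in the sense that it has equally many elements of odd and even length. -/

import Mathlib

/-!
The sign bookkeeping is done by the reflection representation: `s i` acts on `W × ℤˣ` by
`(t, ε) ↦ (s i * t * s i, ±ε)`, the sign flipping exactly when `t = s i`. The sign that `π ω`
attaches to `t` is `(-1) ^ (number of occurrences of t in ris ω)`, and it is `-1` exactly when
`t` is a right inversion of `π ω`. This gives strong exchange for arbitrary words, hence the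
subword order agrees with the order generated by `w * t < w` (`t` a reflection): it is transitive
and the subword property holds for every word of `w`. Lifting properties follow by reading off
subwords of `i :: ω`.

If `s = s i` is a left descent of `w` and `s v > v`, then `z ↦ s z` is a sign-reversing
involution of `[v, w]`. If `s v < v`, the same map cancels all of `[v, w]` except the `z` with
`v ≰ s z`, which it matches bijectively with `[s v, s w] \ [v, s w]`. Induction on `ℓ w` gives
`∑_{z ∈ [v, w]} (-1) ^ ℓ z = if v = w then (-1) ^ ℓ w else 0`.
-/

namespace CoxeterSystem

variable {B : Type*} {W : Type*} [Group W] {M : CoxeterMatrix B}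

/-- Bruhat order on a Coxeter group, via the subword property. -/
def BruhatLE (cs : CoxeterSystem M W) (v w : W) : Prop :=
  ∃ ω : List B, cs.IsReduced ω ∧ cs.wordProd ω = w ∧
    ∃ ω' : List B, ω'.Sublist ω ∧ cs.wordProd ω' = v

/-- Strict Bruhat order. -/
def BruhatLT (cs : CoxeterSystem M W) (v w : W) : Prop :=
  cs.BruhatLE v w ∧ v ≠ w

end CoxeterSystem

open List

theorem List.even_count_map_range_two_mul {α : Type*} [BEq α] (f : ℕ → α) {m : ℕ}
    (hf : ∀ k, f (m + k) = f k) (a : α) : Even (((range (2 * m)).map f).count a) := by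
  rw [two_mul, range_add, map_append, map_map]
  have : f ∘ (m + ·) = f := funext hf
  rw [this, count_append]
  exact ⟨_, rfl⟩

theorem List.mem_of_neg_one_pow_count_eq_neg_one {α : Type*} [BEq α] [LawfulBEq α] {l : List α}
    {a : α} (h : (-1 : ℤˣ) ^ l.count a = -1) : a ∈ l := by
  by_contra ha
  rw [count_eq_zero_of_not_mem ha, pow_zero] at h
  exact absurd h (by decide)

namespace CoxeterSystem

variable {B W : Type*} [Group W] {M : CoxeterMatrix B} (cs : CoxeterSystem M W)

theorem alternatingWord_two_mul_succ (i j : B) (m : ℕ) :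
    alternatingWord i j (2 * (m + 1)) = i :: j :: alternatingWord i j (2 * m) := by
  rw [show 2 * (m + 1) = 2 * m + 1 + 1 by ring, alternatingWord_succ', alternatingWord_succ']
  simp

theorem prod_map_alternatingWord_two_mul {G : Type*} [Monoid G] (f : B → G) (i j : B) (m : ℕ) :
    ((alternatingWord i j (2 * m)).map f).prod = (f i * f j) ^ m := by
  induction m with
  | zero => simp [alternatingWord]
  | succ m ih => rw [alternatingWord_two_mul_succ, map_cons, map_cons, prod_cons, prod_cons, ih,
      pow_succ', mul_assoc]

theorem reverse_alternatingWord_two_mul (i j : B) (m : ℕ) :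
    (alternatingWord i j (2 * m)).reverse = alternatingWord j i (2 * m) := by
  apply ext_getElem (by simp)
  intro k hk _
  simp only [length_reverse, length_alternatingWord] at hk
  rw [getElem_reverse, getElem_alternatingWord _ _ _ _ (by simp; omega),
    getElem_alternatingWord _ _ _ _ hk]
  have : Even (2 * m - 1 - k) ↔ ¬Even k := by
    rw [Nat.sub_sub, Nat.even_sub (by omega), add_comm, Nat.even_add_one]
    simp
  simp only [length_alternatingWord, Nat.even_add, this]
  by_cases Even k <;> simp_all

local prefix:100 "s" => cs.simple
local prefix:100 "π" => cs.wordProd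
local prefix:100 "ℓ" => cs.length
local prefix:100 "ris" => cs.rightInvSeq
local prefix:100 "lis" => cs.leftInvSeq

theorem leftInvSeq_alternatingWord_two_mul (i j : B) (m : ℕ) :
    lis (alternatingWord i j (2 * m)) = (range (2 * m)).map (fun k => s i * (s j * s i) ^ k) := by
  apply ext_getElem (by simp)
  intro k hk _
  rw [getElem_leftInvSeq_alternatingWord cs i j m k (by simpa using hk), getElem_map,
    getElem_range, prod_alternatingWord_eq_mul_pow]
  simp [show (2 * k + 1) / 2 = k by omega]

theorem even_count_rightInvSeq_alternatingWord [DecidableEq W] (i j : B) (t : W) :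
    Even ((ris (alternatingWord i j (2 * M i j))).count t) := by
  rw [← reverse_reverse (ris _), ← leftInvSeq_reverse, count_reverse,
    reverse_alternatingWord_two_mul, leftInvSeq_alternatingWord_two_mul]
  refine even_count_map_range_two_mul _ (fun k => ?_) t
  rw [pow_add, simple_mul_simple_pow, one_mul]

section ReflectionRepresentation

variable [DecidableEq W]

noncomputable def simplePerm (i : B) : Equiv.Perm (W × ℤˣ) :=
  Function.Involutive.toPerm (fun p => (s i * p.1 * s i, if p.1 = s i then -p.2 else p.2)) <| by
    rintro ⟨t, ε⟩
    by_cases ht : t = s i <;> simp [ht, mul_assoc, mul_eq_one_iff_eq_inv]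

theorem simplePerm_apply (i : B) (t : W) (ε : ℤˣ) :
    cs.simplePerm i (t, ε) = (s i * t * s i, if t = s i then -ε else ε) := rfl

theorem prod_map_simplePerm_apply (ω : List B) (t : W) (ε : ℤˣ) :
    (ω.map cs.simplePerm).prod (t, ε) = (π ω * t * (π ω)⁻¹, (-1) ^ (ris ω).count t * ε) := by
  induction ω generalizing t ε with
  | nil => simp
  | cons i ω ih =>
    have hconj : π ω * t * (π ω)⁻¹ = s i ↔ (π ω)⁻¹ * s i * π ω = t := by
      constructor <;> intro h <;> rw [← h] <;> group
    simp only [map_cons, prod_cons, Equiv.Perm.mul_apply, ih, simplePerm_apply, rightInvSeq,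
      count_cons, wordProd_cons, beq_iff_eq, hconj]
    by_cases h : (π ω)⁻¹ * s i * π ω = t
    · simp only [h, if_true, pow_succ, mul_neg_one, neg_mul, mul_inv_rev, inv_simple, Prod.mk.injEq,
        and_true]
      group
    · simp only [h, if_false, add_zero, mul_inv_rev, inv_simple, Prod.mk.injEq, and_true]
      group

theorem isLiftable_simplePerm : M.IsLiftable cs.simplePerm := by
  intro i j
  rw [← prod_map_alternatingWord_two_mul]
  ext ⟨t, ε⟩ : 1
  have hπ : π (alternatingWord i j (2 * M i j)) = 1 := by
    rw [wordProd, prod_map_alternatingWord_two_mul, simple_mul_simple_pow]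
  rw [prod_map_simplePerm_apply, hπ, (cs.even_count_rightInvSeq_alternatingWord i j t).neg_one_pow]
  simp

noncomputable def reflectionRep : W →* Equiv.Perm (W × ℤˣ) :=
  cs.lift ⟨cs.simplePerm, cs.isLiftable_simplePerm⟩

theorem reflectionRep_wordProd (ω : List B) :
    cs.reflectionRep (π ω) = (ω.map cs.simplePerm).prod := by
  rw [wordProd, map_list_prod, map_map]
  congr 2
  funext i
  exact cs.lift_apply_simple cs.isLiftable_simplePerm i

noncomputable def inversionSign (w t : W) : ℤˣ := (cs.reflectionRep w (t, 1)).2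

theorem inversionSign_wordProd (ω : List B) (t : W) :
    cs.inversionSign (π ω) t = (-1) ^ (ris ω).count t := by
  rw [inversionSign, reflectionRep_wordProd, prod_map_simplePerm_apply, mul_one]

theorem reflectionRep_apply (w t : W) (ε : ℤˣ) :
    cs.reflectionRep w (t, ε) = (w * t * w⁻¹, cs.inversionSign w t * ε) := by
  obtain ⟨ω, rfl⟩ := cs.wordProd_surjective w
  rw [reflectionRep_wordProd, prod_map_simplePerm_apply, inversionSign_wordProd]

theorem inversionSign_mul (x y t : W) :
    cs.inversionSign (x * y) t = cs.inversionSign x (y * t * y⁻¹) * cs.inversionSign y t := by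
  rw [inversionSign, map_mul, Equiv.Perm.mul_apply, reflectionRep_apply, reflectionRep_apply,
    mul_one]

theorem inversionSign_one (t : W) : cs.inversionSign 1 t = 1 := by
  simp [inversionSign]

theorem inversionSign_simple (i : B) (t : W) :
    cs.inversionSign (s i) t = if t = s i then -1 else 1 := by
  rw [inversionSign, reflectionRep, lift_apply_simple, simplePerm_apply]

theorem inversionSign_self {t : W} (ht : cs.IsReflection t) : cs.inversionSign t t = -1 := by
  obtain ⟨u, i, rfl⟩ := ht
  have hconj : u⁻¹ * (u * s i * u⁻¹) * u⁻¹⁻¹ = s i := by group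
  have hu := cs.inversionSign_mul u u⁻¹ (u * s i * u⁻¹)
  rw [mul_inv_cancel, inversionSign_one, hconj] at hu
  rw [inversionSign_mul, hconj, inversionSign_mul,
    show s i * s i * (s i)⁻¹ = s i by group, inversionSign_simple, if_pos rfl, mul_right_comm,
    ← hu, one_mul]

theorem isRightInversion_of_inversionSign_eq_neg_one {w t : W}
    (h : cs.inversionSign w t = -1) : cs.IsRightInversion w t := by
  obtain ⟨ω, hω, rfl⟩ := cs.exists_isReduced w
  rw [inversionSign_wordProd] at h
  exact cs.isRightInversion_of_mem_rightInvSeq hω (mem_of_neg_one_pow_count_eq_neg_one h)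

theorem inversionSign_eq_neg_one_iff {w t : W} (ht : cs.IsReflection t) :
    cs.inversionSign w t = -1 ↔ cs.IsRightInversion w t := by
  refine ⟨cs.isRightInversion_of_inversionSign_eq_neg_one, fun hwt => by_contra fun hne => ?_⟩
  have hwtt : cs.inversionSign (w * t) t = -1 := by
    rw [inversionSign_mul, mul_inv_cancel_right, inversionSign_self cs ht,
      (Int.units_eq_one_or _).resolve_right hne, one_mul]
  have := (cs.isRightInversion_of_inversionSign_eq_neg_one hwtt).2
  rw [mul_assoc, ht.mul_self, mul_one] at this
  exact lt_asymm this hwt.2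

end ReflectionRepresentation

/-- The strong exchange property. -/
theorem mem_rightInvSeq_of_isRightInversion {ω : List B} {t : W}
    (h : cs.IsRightInversion (π ω) t) : t ∈ ris ω := by
  classical
  rw [← cs.inversionSign_eq_neg_one_iff h.1, inversionSign_wordProd] at h
  exact mem_of_neg_one_pow_count_eq_neg_one h

theorem exists_wordProd_eraseIdx_of_isRightInversion {ω : List B} {t : W}
    (h : cs.IsRightInversion (π ω) t) : ∃ j, π (ω.eraseIdx j) = π ω * t := by
  obtain ⟨j, hj, hjt⟩ := getElem_of_mem (cs.mem_rightInvSeq_of_isRightInversion h)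
  refine ⟨j, ?_⟩
  rw [← wordProd_mul_getD_rightInvSeq, getD_eq_getElem _ _ hj, hjt]

theorem simple_mul_mul_eq_or_isRightInversion {w t : W} (ht : cs.IsRightInversion w t) (i : B) :
    s i * (w * t) = w ∨ cs.IsRightInversion (s i * w) t := by
  classical
  by_cases hc : w * t * w⁻¹ = s i
  · left
    calc s i * (w * t) = w * t * w⁻¹ * (w * t) := by rw [hc]
      _ = w * (t * t) := by group
      _ = w := by rw [ht.1.mul_self, mul_one]
  · right
    rw [← cs.inversionSign_eq_neg_one_iff ht.1, inversionSign_mul, inversionSign_simple, if_neg hc,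
      one_mul, cs.inversionSign_eq_neg_one_iff ht.1]
    exact ht

def ChainLE (v w : W) : Prop :=
  Relation.ReflTransGen (fun x y => ∃ t, cs.IsRightInversion y t ∧ x = y * t) v w

variable {cs} in
theorem ChainLE.simple_mul {u w : W} (h : cs.ChainLE u w) (i : B) :
    cs.ChainLE (s i * u) w ∨ cs.ChainLE (s i * u) (s i * w) := by
  induction h with
  | refl => exact .inr .refl
  | tail _ hyw ih =>
    obtain ⟨t, ht, rfl⟩ := hyw
    rcases ih with h | h
    · exact .inl (h.tail ⟨t, ht, rfl⟩)
    · rcases cs.simple_mul_mul_eq_or_isRightInversion ht i with he | he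
      · exact .inl (he ▸ h)
      · exact .inr (h.tail ⟨t, he, by rw [mul_assoc]⟩)

theorem chainLE_wordProd_of_isReduced_cons {i : B} {ω : List B} (hω : cs.IsReduced (i :: ω)) :
    cs.ChainLE (π ω) (π (i :: ω)) :=
  .single ⟨(π ω)⁻¹ * s i * π ω, cs.isRightInversion_of_mem_rightInvSeq hω (by simp [rightInvSeq]),
    by simp [wordProd_cons, mul_assoc]⟩

theorem chainLE_wordProd_of_sublist {ω' ω : List B} (h : ω' <+ ω) (hω : cs.IsReduced ω) :
    cs.ChainLE (π ω') (π ω) := by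
  induction h with
  | slnil => exact .refl
  | cons i _ ih =>
    exact (ih (by simpa using hω.drop 1)).trans (cs.chainLE_wordProd_of_isReduced_cons hω)
  | cons_cons i _ ih =>
    rw [wordProd_cons, wordProd_cons]
    rcases (ih (by simpa using hω.drop 1)).simple_mul i with h | h
    · exact h.trans (wordProd_cons cs i _ ▸ cs.chainLE_wordProd_of_isReduced_cons hω)
    · exact h

variable {cs} in
theorem ChainLE.exists_sublist {v w : W} (h : cs.ChainLE v w) {ω : List B} (hω : π ω = w) :
    ∃ ω', ω' <+ ω ∧ π ω' = v := by
  induction h generalizing ω with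
  | refl => exact ⟨ω, .refl ω, hω⟩
  | tail _ hyw ih =>
    obtain ⟨t, ht, rfl⟩ := hyw
    subst hω
    obtain ⟨j, hj⟩ := cs.exists_wordProd_eraseIdx_of_isRightInversion ht
    obtain ⟨ω', hω', rfl⟩ := ih hj
    exact ⟨ω', hω'.trans (eraseIdx_sublist ω j), rfl⟩

theorem bruhatLE_iff_chainLE {v w : W} : cs.BruhatLE v w ↔ cs.ChainLE v w := by
  constructor
  · rintro ⟨ω, hω, rfl, ω', hω', rfl⟩
    exact cs.chainLE_wordProd_of_sublist hω' hω
  · intro h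
    obtain ⟨ω, hω, rfl⟩ := cs.exists_isReduced w
    obtain ⟨ω', hω', rfl⟩ := h.exists_sublist rfl
    exact ⟨ω, hω, rfl, ω', hω', rfl⟩

variable {cs} in
theorem IsReduced.cons {ω : List B} (hω : cs.IsReduced ω) {i : B}
    (hi : ¬cs.IsLeftDescent (π ω) i) : cs.IsReduced (i :: ω) := by
  rw [IsReduced, wordProd_cons, cs.not_isLeftDescent_iff.mp hi, hω, length_cons]

section BruhatLE

variable {cs}

theorem BruhatLE.refl (w : W) : cs.BruhatLE w w :=
  (bruhatLE_iff_chainLE cs).mpr .refl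

theorem BruhatLE.trans {u v w : W} (h₁ : cs.BruhatLE u v) (h₂ : cs.BruhatLE v w) :
    cs.BruhatLE u w :=
  (bruhatLE_iff_chainLE cs).mpr
    (((bruhatLE_iff_chainLE cs).mp h₁).trans ((bruhatLE_iff_chainLE cs).mp h₂))

theorem BruhatLE.exists_sublist {v w : W} (h : cs.BruhatLE v w) {ω : List B} (hω : π ω = w) :
    ∃ ω', ω' <+ ω ∧ π ω' = v :=
  ((bruhatLE_iff_chainLE cs).mp h).exists_sublist hω

theorem BruhatLE.length_lt {v w : W} (h : cs.BruhatLE v w) (hne : v ≠ w) : ℓ v < ℓ w := by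
  obtain ⟨ω, hω, rfl, ω', hω', rfl⟩ := h
  have hlen : ω'.length < ω.length :=
    lt_of_le_of_ne hω'.length_le fun heq => hne (by rw [hω'.eq_of_length heq])
  rw [hω]
  exact (cs.length_wordProd_le ω').trans_lt hlen

theorem bruhatLE_simple_mul_self {w : W} {i : B} (hw : ¬cs.IsLeftDescent w i) :
    cs.BruhatLE w (s i * w) := by
  obtain ⟨ω, hω, rfl⟩ := cs.exists_isReduced w
  exact ⟨i :: ω, hω.cons hw, wordProd_cons .., ω, sublist_cons_self i ω, rfl⟩

theorem simple_mul_bruhatLE_self {w : W} {i : B} (hw : cs.IsLeftDescent w i) :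
    cs.BruhatLE (s i * w) w := by
  simpa using bruhatLE_simple_mul_self (cs.isLeftDescent_iff_not_isLeftDescent_mul.mp hw)

theorem BruhatLE.simple_mul_of_not_isLeftDescent_right {v w : W} {i : B}
    (hw : ¬cs.IsLeftDescent w i) (h : cs.BruhatLE v w) : cs.BruhatLE (s i * v) (s i * w) := by
  obtain ⟨ω, hω, rfl⟩ := cs.exists_isReduced w
  obtain ⟨ω', hω', rfl⟩ := h.exists_sublist rfl
  exact ⟨i :: ω, hω.cons hw, wordProd_cons .., i :: ω', hω'.cons_cons i, wordProd_cons ..⟩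

theorem BruhatLE.le_simple_mul_or_simple_mul_le {v w : W} (h : cs.BruhatLE v w) (i : B) :
    cs.BruhatLE v (s i * w) ∨ cs.BruhatLE (s i * v) (s i * w) := by
  obtain ⟨ω, hω, hωw⟩ := cs.exists_isReduced (s i * w)
  have hiω : π (i :: ω) = w := by rw [wordProd_cons, ← hωw, simple_mul_simple_cancel_left]
  obtain ⟨ω', hω', rfl⟩ := h.exists_sublist hiω
  cases hω' with
  | cons _ hω' => exact .inl ⟨ω, hω, hωw.symm, ω', hω', rfl⟩
  | cons_cons _ hω' =>
    exact .inr ⟨ω, hω, hωw.symm, _, hω', by rw [wordProd_cons, simple_mul_simple_cancel_left]⟩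

theorem BruhatLE.simple_mul_le_of_isLeftDescent {v w : W} {i : B} (hw : cs.IsLeftDescent w i)
    (h : cs.BruhatLE v w) : cs.BruhatLE (s i * v) w := by
  rcases h.le_simple_mul_or_simple_mul_le i with h | h
  · simpa using h.simple_mul_of_not_isLeftDescent_right
      (cs.isLeftDescent_iff_not_isLeftDescent_mul.mp hw)
  · exact h.trans (simple_mul_bruhatLE_self hw)

theorem BruhatLE.le_simple_mul_of_not_isLeftDescent {v w : W} {i : B}
    (hv : ¬cs.IsLeftDescent v i) (h : cs.BruhatLE v w) : cs.BruhatLE v (s i * w) := by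
  rcases h.le_simple_mul_or_simple_mul_le i with h | h
  · exact h
  · exact (bruhatLE_simple_mul_self hv).trans h

theorem BruhatLE.simple_mul_of_isLeftDescent_left {v w : W} {i : B} (hv : cs.IsLeftDescent v i)
    (h : cs.BruhatLE v w) : cs.BruhatLE (s i * v) (s i * w) := by
  rcases h.le_simple_mul_or_simple_mul_le i with h | h
  · exact (simple_mul_bruhatLE_self hv).trans h
  · exact h

end BruhatLE

theorem neg_one_pow_length_simple_mul (i : B) (w : W) :
    (-1 : ℤ) ^ ℓ (s i * w) = -(-1) ^ ℓ w := by
  rcases cs.length_simple_mul w i with h | h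
  · rw [h, pow_succ, mul_neg_one]
  · rw [← h, pow_succ, mul_neg_one, neg_neg]

theorem sum_neg_one_pow_length_eq_zero {S : Finset W} {i : B} (hS : ∀ w ∈ S, s i * w ∈ S) :
    ∑ w ∈ S, (-1 : ℤ) ^ ℓ w = 0 :=
  Finset.sum_involution (fun w _ => s i * w)
    (fun w _ => by rw [neg_one_pow_length_simple_mul, add_neg_cancel])
    (fun w _ _ he => cs.length_simple_mul_ne w i (congrArg cs.length he))
    hS (fun w _ => cs.simple_mul_simple_cancel_left i)

variable [Fintype W]

open Classical in
noncomputable def bruhatIcc (v w : W) : Finset W :=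
  Finset.univ.filter fun z => cs.BruhatLE v z ∧ cs.BruhatLE z w

theorem mem_bruhatIcc {v w z : W} : z ∈ cs.bruhatIcc v w ↔ cs.BruhatLE v z ∧ cs.BruhatLE z w := by
  simp [bruhatIcc]

theorem bruhatIcc_self (w : W) : cs.bruhatIcc w w = {w} := by
  ext z
  rw [mem_bruhatIcc, Finset.mem_singleton]
  refine ⟨fun ⟨h₁, h₂⟩ => by_contra fun hne => ?_, fun h => h ▸ ⟨.refl z, .refl z⟩⟩
  exact lt_asymm (h₁.length_lt (Ne.symm hne)) (h₂.length_lt hne)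

theorem bruhatIcc_eq_empty {v w : W} (h : ¬cs.BruhatLE v w) : cs.bruhatIcc v w = ∅ :=
  Finset.eq_empty_of_forall_notMem fun _ hz =>
    h (((cs.mem_bruhatIcc).mp hz).1.trans ((cs.mem_bruhatIcc).mp hz).2)

theorem sum_bruhatIcc_eq_zero_of_isLeftDescent {v w : W} {i : B} (hw : cs.IsLeftDescent w i)
    (hv : ¬cs.IsLeftDescent v i) : ∑ z ∈ cs.bruhatIcc v w, (-1 : ℤ) ^ ℓ z = 0 := by
  refine cs.sum_neg_one_pow_length_eq_zero (i := i) fun z hz => ?_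
  rw [mem_bruhatIcc] at hz ⊢
  exact ⟨hz.1.le_simple_mul_of_not_isLeftDescent hv, hz.2.simple_mul_le_of_isLeftDescent hw⟩

open Classical in
theorem sum_bruhatIcc_filter_not_bruhatLE_simple_mul {v w : W} {i : B}
    (hw : cs.IsLeftDescent w i) (hv : cs.IsLeftDescent v i) :
    ∑ z ∈ (cs.bruhatIcc v w).filter (fun z => ¬cs.BruhatLE v (s i * z)), (-1 : ℤ) ^ ℓ z =
      -∑ y ∈ (cs.bruhatIcc (s i * v) (s i * w)).filter (fun y => ¬cs.BruhatLE v y),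
        (-1 : ℤ) ^ ℓ y := by
  rw [← Finset.sum_neg_distrib]
  refine Finset.sum_nbij' (s i * ·) (s i * ·) (fun z hz => ?_) (fun y hy => ?_) (by simp)
    (by simp) (fun z _ => by rw [neg_one_pow_length_simple_mul, neg_neg])
  · simp only [Finset.mem_filter, mem_bruhatIcc] at hz ⊢
    have hz_desc : cs.IsLeftDescent z i := by_contra fun hz' =>
      hz.2 (hz.1.1.trans (bruhatLE_simple_mul_self hz'))
    exact ⟨⟨hz.1.1.simple_mul_of_isLeftDescent_left hv,
      hz.1.2.simple_mul_of_isLeftDescent_left hz_desc⟩, hz.2⟩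
  · simp only [Finset.mem_filter, mem_bruhatIcc, simple_mul_simple_cancel_left] at hy ⊢
    have hy_asc : ¬cs.IsLeftDescent y i := fun hy' =>
      hy.2 (by simpa using hy.1.1.simple_mul_le_of_isLeftDescent hy')
    have hsw := cs.isLeftDescent_iff_not_isLeftDescent_mul.mp hw
    exact ⟨⟨by simpa using hy.1.1.simple_mul_of_not_isLeftDescent_right hy_asc,
      by simpa using hy.1.2.simple_mul_of_not_isLeftDescent_right hsw⟩, hy.2⟩

theorem sum_bruhatIcc_of_isLeftDescent {v w : W} {i : B} (hw : cs.IsLeftDescent w i)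
    (hv : cs.IsLeftDescent v i) :
    ∑ z ∈ cs.bruhatIcc v w, (-1 : ℤ) ^ ℓ z =
      ∑ z ∈ cs.bruhatIcc v (s i * w), (-1 : ℤ) ^ ℓ z -
        ∑ z ∈ cs.bruhatIcc (s i * v) (s i * w), (-1 : ℤ) ^ ℓ z := by
  classical
  have hpaired : ∑ z ∈ (cs.bruhatIcc v w).filter (fun z => cs.BruhatLE v (s i * z)),
      (-1 : ℤ) ^ ℓ z = 0 := by
    refine cs.sum_neg_one_pow_length_eq_zero (i := i) fun z hz => ?_
    simp only [Finset.mem_filter, mem_bruhatIcc, simple_mul_simple_cancel_left] at hz ⊢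
    exact ⟨⟨hz.2, hz.1.2.simple_mul_le_of_isLeftDescent hw⟩, hz.1.1⟩
  have hsplit : (cs.bruhatIcc (s i * v) (s i * w)).filter (fun y => cs.BruhatLE v y) =
      cs.bruhatIcc v (s i * w) := by
    ext y
    simp only [Finset.mem_filter, mem_bruhatIcc]
    exact ⟨fun h => ⟨h.2, h.1.2⟩, fun h => ⟨⟨(simple_mul_bruhatLE_self hv).trans h.1, h.2⟩, h.1⟩⟩
  rw [← Finset.sum_filter_add_sum_filter_not (cs.bruhatIcc v w) (fun z => cs.BruhatLE v (s i * z)),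
    hpaired, sum_bruhatIcc_filter_not_bruhatLE_simple_mul cs hw hv,
    ← Finset.sum_filter_add_sum_filter_not (cs.bruhatIcc (s i * v) (s i * w))
      (fun y => cs.BruhatLE v y), hsplit]
  ring

theorem sum_bruhatIcc [DecidableEq W] (v w : W) :
    ∑ z ∈ cs.bruhatIcc v w, (-1 : ℤ) ^ ℓ z = if v = w then (-1) ^ ℓ w else 0 := by
  induction hn : ℓ w using Nat.strong_induction_on generalizing v w with
  | _ n ih =>
  subst hn
  by_cases hw1 : w = 1
  · subst hw1
    by_cases hv : v = 1
    · rw [hv, bruhatIcc_self, Finset.sum_singleton, if_pos rfl]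
    · rw [bruhatIcc_eq_empty cs fun h => by simpa using h.length_lt hv, Finset.sum_empty,
        if_neg hv]
  obtain ⟨i, hw⟩ := cs.exists_leftDescent_of_ne_one hw1
  by_cases hv : cs.IsLeftDescent v i
  · have hv_ne : v ≠ s i * w := by
      rintro rfl
      exact cs.isLeftDescent_iff_not_isLeftDescent_mul.mp hw hv
    rw [sum_bruhatIcc_of_isLeftDescent cs hw hv, ih _ hw v _ rfl, ih _ hw _ _ rfl, if_neg hv_ne]
    simp only [mul_right_inj, neg_one_pow_length_simple_mul]
    split_ifs <;> ring
  · rw [sum_bruhatIcc_eq_zero_of_isLeftDescent cs hw hv, if_neg]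
    rintro rfl
    exact hv hw

end CoxeterSystem

open Classical in
/-- Every Bruhat interval `[v, w]` of length at least one in a finite Coxeter group
is Eulerian: the alternating sum `∑_{v ≤ z ≤ w} (-1)^{ℓ(z)}` vanishes, i.e. the
interval has equally many elements of even and odd length. -/
theorem bruhat_interval_eulerian {B W : Type*} [Group W] [Fintype W]
    {M : CoxeterMatrix B} (cs : CoxeterSystem M W) (v w : W)
    (hvw : cs.BruhatLT v w) :
    ∑ z ∈ Finset.univ.filter (fun z => cs.BruhatLE v z ∧ cs.BruhatLE z w),
      (-1 : ℤ) ^ cs.length z = 0 :=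
  (cs.sum_bruhatIcc v w).trans (if_neg hvw.2)
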